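/- arXiv:1701.06126 — 6 statements merged into one kernel-verified Lean document; each statement's English description precedes it below -/
import Mathlib

section
/- Let G be an r-graph on vertex set [n], let x = (x_1,…,x_n) be a feasible weighting, and let i, j ∈ [n]. If x_i ≥ x_j, then λ(π_{ij}(G), x) ≥ λ(G, x). -/
open Finset

/-- The compression `π_{ij}(G)`: every edge of the form `{j} ∪ e` with `i ∉ e` and
`{i} ∪ e ∉ G` is replaced by `{i} ∪ e`. -/
def compress {n : ℕ} (G : Finset (Finset (Fin n))) (i j : Fin n) :
    Finset (Finset (Fin n)) :=
  G.filter (fun e => ¬(j ∈ e ∧ i ∉ e ∧ insert i (e.erase j) ∉ G)) ∪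
    (G.filter (fun e => j ∈ e ∧ i ∉ e ∧ insert i (e.erase j) ∉ G)).image
      (fun e => insert i (e.erase j))

/-- If `G` is an `r`-graph on `[n]`, `x` is a feasible weighting, and `x i ≥ x j`,
then `λ(π_{ij}(G), x) ≥ λ(G, x)`. -/
theorem compression_lagrangian_mono {n r : ℕ} (G : Finset (Finset (Fin n)))
    (hG : ∀ e ∈ G, e.card = r) (x : Fin n → ℝ)
    (hx0 : ∀ i, 0 ≤ x i) (hx1 : (∑ i, x i) = 1) (i j : Fin n) (hij : x j ≤ x i) :
    (∑ e ∈ G, ∏ k ∈ e, x k) ≤ ∑ e ∈ compress G i j, ∏ k ∈ e, x k := by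
  classical
  unfold compress
  have hd : Disjoint
      (G.filter (fun e => ¬(j ∈ e ∧ i ∉ e ∧ insert i (e.erase j) ∉ G)))
      ((G.filter (fun e => j ∈ e ∧ i ∉ e ∧ insert i (e.erase j) ∉ G)).image
        (fun e => insert i (e.erase j))) := by
    rw [Finset.disjoint_right]
    intro f hf hfB
    simp only [Finset.mem_image, Finset.mem_filter] at hf hfB
    obtain ⟨e, ⟨-, -, -, hne⟩, rfl⟩ := hf
    exact hne hfB.1
  have hi : ∀ a ∈ G.filter (fun e => j ∈ e ∧ i ∉ e ∧ insert i (e.erase j) ∉ G),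
      ∀ b ∈ G.filter (fun e => j ∈ e ∧ i ∉ e ∧ insert i (e.erase j) ∉ G),
      insert i (a.erase j) = insert i (b.erase j) → a = b := by
    intro a ha b hb hab
    simp only [Finset.mem_filter] at ha hb
    have hai : i ∉ a.erase j := fun h => ha.2.2.1 (Finset.mem_of_mem_erase h)
    have hbi : i ∉ b.erase j := fun h => hb.2.2.1 (Finset.mem_of_mem_erase h)
    have h1 : a.erase j = b.erase j := by
      have := congrArg (fun s => Finset.erase s i) hab
      simpa [Finset.erase_insert hai, Finset.erase_insert hbi] using this
    have h2 : insert j (a.erase j) = insert j (b.erase j) := by rw [h1]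
    rwa [Finset.insert_erase ha.2.1, Finset.insert_erase hb.2.1] at h2
  rw [Finset.sum_union hd, Finset.sum_image hi]
  conv_lhs => rw [← Finset.sum_filter_add_sum_filter_not G
    (fun e => j ∈ e ∧ i ∉ e ∧ insert i (e.erase j) ∉ G) (fun e => ∏ k ∈ e, x k)]
  rw [add_comm]
  refine add_le_add le_rfl (Finset.sum_le_sum ?_)
  intro e he
  simp only [Finset.mem_filter] at he
  have hie : i ∉ e.erase j := fun h => he.2.2.1 (Finset.mem_of_mem_erase h)
  rw [Finset.prod_insert hie, ← Finset.mul_prod_erase e x he.2.1]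
  exact mul_le_mul_of_nonneg_right hij (Finset.prod_nonneg fun k _ => hx0 k)
end

section
/- Let G be an M_t^r-free r-graph. Then there exists an M_t^r-free r-graph G′ on a vertex set [n′] with n′ ≤ |V(G)| that is dense and left-compressed and satisfies λ(G′) ≥ λ(G). -/
open Finset

/-- The Lagrangian of a hypergraph `G` on vertex set `Fin n`. -/
noncomputable def lag {n : ℕ} (G : Finset (Finset (Fin n))) : ℝ :=
  sSup {v : ℝ | ∃ x : Fin n → ℝ, (∀ i, 0 ≤ x i) ∧ (∑ i, x i) = 1 ∧
    v = ∑ e ∈ G, ∏ i ∈ e, x i}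

/-- `G` is `M_t^r`-free: `G` contains no `t` pairwise disjoint edges. -/
def MtFree {n : ℕ} (t : ℕ) (G : Finset (Finset (Fin n))) : Prop :=
  ¬ ∃ S : Finset (Finset (Fin n)), S ⊆ G ∧ S.card = t ∧
      ∀ e ∈ S, ∀ f ∈ S, e ≠ f → Disjoint e f

/-- `G` is left-compressed: `L_G(j∖i) = ∅` whenever `i < j`, i.e., replacing `j`
by `i` in any edge containing `j` but not `i` again yields an edge. -/
def LeftCompressed {n : ℕ} (G : Finset (Finset (Fin n))) : Prop :=
  ∀ e ∈ G, ∀ i j : Fin n, i < j → j ∈ e → i ∉ e → insert i (e.erase j) ∈ G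

/-- `G` is dense: every proper subgraph has strictly smaller Lagrangian. -/
def LagDense {n : ℕ} (G : Finset (Finset (Fin n))) : Prop :=
  ∀ H : Finset (Finset (Fin n)), H ⊂ G → lag H < lag G

/-! Compressing `j` into `i` (the UV-compression with `u = {i}`, `v = {j}`) preserves
uniformity and does not decrease the Lagrangian: for a weighting with `x j ≤ x i` the bound is
termwise, and otherwise one swaps the weights of `i` and `j`, since compressing `i` into `j` is the
same as compressing `j` into `i` and then relabelling by `swap i j`. It also preserves
`M_t`-freeness: a matching of the compressed graph not contained in the original one has exactly
one new edge, the one through `i`, and relabelling the whole matching by `swap i j` moves it back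
into the original graph. Alternately passing to a dense subgraph with at least the same Lagrangian
and compressing must stop, at a dense left-compressed graph, because the vertex-label sum
`∑ e, ∑ v ∈ e, v` strictly decreases under a compression that moves an edge. -/

open UV FinsetFamily

namespace Finset

variable {α : Type*} [DecidableEq α] {i j v : α} {a : Finset α}

lemma swap_apply_of_mem_of_notMem (hv : v ∈ a) (hi : i ∉ a) :
    Equiv.swap i j v = if v = j then i else v := by
  rw [Equiv.swap_apply_def, if_neg (ne_of_mem_of_not_mem hv hi)]

lemma map_swap_of_mem_iff (h : i ∈ a ↔ j ∈ a) : a.map (Equiv.swap i j).toEmbedding = a := by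
  ext v
  simp only [mem_map_equiv, Equiv.symm_swap, Equiv.swap_apply_def]
  grind

lemma map_swap_eq_insert_erase (hj : j ∈ a) (hi : i ∉ a) :
    a.map (Equiv.swap i j).toEmbedding = insert i (a.erase j) := by
  ext v
  simp only [mem_map_equiv, Equiv.symm_swap, Equiv.swap_apply_def, mem_insert, mem_erase]
  grind

@[simp]
lemma map_swap_map_swap (i j : α) (a : Finset α) :
    (a.map (Equiv.swap i j).toEmbedding).map (Equiv.swap i j).toEmbedding = a := by
  ext; simp

end Finset

namespace UV

section Sum
variable {α β : Type*} [GeneralizedBooleanAlgebra α] [DecidableRel (@Disjoint α _ _)]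
  [DecidableLE α] [DecidableEq α] [AddCommMonoid β]

lemma sum_compression (u v : α) (s : Finset α) (f : α → β) :
    ∑ a ∈ 𝓒 u v s, f a = ∑ a ∈ s, if compress u v a ∈ s then f a else f (compress u v a) := by
  rw [compression, sum_union compress_disjoint, filter_image, sum_image compress_injOn,
    sum_ite, sum_filter, sum_filter]

end Sum

variable {α : Type*} [DecidableEq α] {i j : α} {a : Finset α}

lemma compress_singleton (i j : α) (a : Finset α) :
    compress {i} {j} a = if i ∉ a ∧ j ∈ a then a.map (Equiv.swap i j).toEmbedding else a := by
  simp only [compress, disjoint_singleton_left, singleton_subset_iff]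
  split_ifs with h
  · rw [map_swap_eq_insert_erase h.2 h.1, sup_eq_union, union_singleton,
      sdiff_singleton_eq_erase, erase_insert_of_ne (ne_of_mem_of_not_mem h.2 h.1).symm]
  · rfl

lemma mem_compression_singleton {G : Finset (Finset α)} :
    a ∈ 𝓒 {i} {j} G ↔ (a ∈ G ∧ a.map (Equiv.swap i j).toEmbedding ∈ G) ∨
      ((a ∈ G ∨ a.map (Equiv.swap i j).toEmbedding ∈ G) ∧ (j ∈ a → i ∈ a)) := by
  rw [mem_compression]
  simp only [compress_singleton]
  constructor
  · rintro (⟨ha, hc⟩ | ⟨ha, b, hb, rfl⟩)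
    · split_ifs at hc with h
      · exact .inl ⟨ha, hc⟩
      · exact .inr ⟨.inl ha, by tauto⟩
    · split_ifs at ha ⊢ with h
      · simp [hb, h.2]
      · exact absurd hb ha
  · rintro (⟨ha, hσ⟩ | ⟨ha | hσ, hji⟩)
    · exact .inl ⟨ha, by split_ifs <;> assumption⟩
    · exact .inl ⟨ha, by rwa [if_neg (by tauto)]⟩
    · by_cases ha : a ∈ G
      · exact .inl ⟨ha, by rwa [if_neg (by tauto)]⟩
      by_cases hij : i ∈ a ∧ j ∉ a
      · exact .inr ⟨ha, _, hσ, by simp [hij]⟩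
      · rw [map_swap_of_mem_iff (by tauto)] at hσ
        exact absurd hσ ha

lemma map_compression_swap (i j : α) (G : Finset (Finset α)) :
    (𝓒 {i} {j} G).map (Equiv.swap i j).finsetCongr.toEmbedding = 𝓒 {j} {i} G := by
  ext a
  rw [mem_map_equiv, Equiv.finsetCongr_symm, Equiv.finsetCongr_apply, mem_compression_singleton,
    mem_compression_singleton, Equiv.symm_swap, Equiv.swap_comm j i]
  simp only [map_swap_map_swap, mem_map_equiv, Equiv.symm_swap, Equiv.swap_apply_left,
    Equiv.swap_apply_right]
  tauto

variable {G : Finset (Finset α)}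

lemma map_swap_mem_of_mem_compression (ha : a ∈ 𝓒 {i} {j} G) (hi : i ∉ a) :
    a.map (Equiv.swap i j).toEmbedding ∈ G := by
  rcases mem_compression_singleton.1 ha with ⟨-, hσ⟩ | ⟨ha | hσ, hji⟩
  · exact hσ
  · rwa [map_swap_of_mem_iff (by tauto)]
  · exact hσ

lemma mem_and_map_swap_mem_of_mem_compression_of_notMem (ha : a ∈ 𝓒 {i} {j} G) (haG : a ∉ G) :
    i ∈ a ∧ a.map (Equiv.swap i j).toEmbedding ∈ G := by
  have hi : i ∈ a := singleton_subset_iff.1 (le_of_mem_compression_of_notMem ha haG)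
  refine ⟨hi, ?_⟩
  rcases mem_compression_singleton.1 ha with ⟨haG', -⟩ | ⟨haG' | hσ, -⟩
  · exact absurd haG' haG
  · exact absurd haG' haG
  · exact hσ

lemma map_swap_mem_of_subset_compression {S : Finset (Finset α)} (hS : S ⊆ 𝓒 {i} {j} G)
    (hdisj : (S : Set (Finset α)).Pairwise Disjoint) (hSG : ¬ S ⊆ G) :
    ∀ a ∈ S, a.map (Equiv.swap i j).toEmbedding ∈ G := by
  obtain ⟨a₀, ha₀S, ha₀G⟩ := not_subset.1 hSG
  obtain ⟨hi₀, hσ₀⟩ := mem_and_map_swap_mem_of_mem_compression_of_notMem (hS ha₀S) ha₀G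
  intro a ha
  by_cases h : a = a₀
  · exact h ▸ hσ₀
  · exact map_swap_mem_of_mem_compression (hS ha)
      fun hi ↦ disjoint_left.1 (hdisj ha ha₀S h) hi hi₀

end UV

section Lagrangian

variable {α : Type*}

def lagPoly (G : Finset (Finset α)) (x : α → ℝ) : ℝ := ∑ e ∈ G, ∏ i ∈ e, x i

lemma lagPoly_nonneg (G : Finset (Finset α)) {x : α → ℝ} (hx : ∀ i, 0 ≤ x i) :
    0 ≤ lagPoly G x :=
  sum_nonneg fun _ _ ↦ prod_nonneg fun i _ ↦ hx i

lemma lagPoly_map_perm (σ : Equiv.Perm α) (G : Finset (Finset α)) (x : α → ℝ) :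
    lagPoly (G.map σ.finsetCongr.toEmbedding) x = lagPoly G (x ∘ σ) := by
  simp only [lagPoly, sum_map, Equiv.coe_toEmbedding, Equiv.finsetCongr_apply, prod_map,
    Function.comp_apply]

lemma comp_perm_mem_stdSimplex [Fintype α] {x : α → ℝ} (hx : x ∈ stdSimplex ℝ α)
    (σ : Equiv.Perm α) : x ∘ σ ∈ stdSimplex ℝ α :=
  ⟨fun v ↦ hx.1 _, by rw [← hx.2]; exact Equiv.sum_comp σ x⟩

variable [DecidableEq α]

lemma prod_le_prod_compress {i j : α} {x : α → ℝ} (hx : ∀ v, 0 ≤ x v) (hij : x j ≤ x i)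
    (a : Finset α) : ∏ v ∈ a, x v ≤ ∏ v ∈ compress {i} {j} a, x v := by
  rw [compress_singleton]
  split_ifs with h
  · rw [prod_map]
    refine prod_le_prod (fun v _ ↦ hx v) fun v hv ↦ ?_
    rw [Equiv.coe_toEmbedding, swap_apply_of_mem_of_notMem hv h.1]
    split_ifs with hvj
    · exact hvj ▸ hij
    · exact le_rfl
  · exact le_rfl

lemma lagPoly_le_lagPoly_compression {i j : α} {x : α → ℝ} (hx : ∀ v, 0 ≤ x v)
    (hij : x j ≤ x i) (G : Finset (Finset α)) : lagPoly G x ≤ lagPoly (𝓒 {i} {j} G) x := by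
  rw [lagPoly, lagPoly, sum_compression]
  gcongr with a
  split_ifs
  · exact le_rfl
  · exact prod_le_prod_compress hx hij a

end Lagrangian

section Fin

variable {n t : ℕ}

lemma lag_eq_sSup (G : Finset (Finset (Fin n))) :
    lag G = sSup (lagPoly G '' stdSimplex ℝ (Fin n)) := by
  rw [lag]
  congr 1
  ext v
  simp only [lagPoly, stdSimplex, Set.mem_image, Set.mem_ofPred_eq, and_assoc, eq_comm]

lemma lag_le_lag_of_forall {G H : Finset (Finset (Fin n))}
    (h : ∀ x ∈ stdSimplex ℝ (Fin n), ∃ y ∈ stdSimplex ℝ (Fin n), lagPoly G x ≤ lagPoly H y) :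
    lag G ≤ lag H := by
  have hbdd : BddAbove (lagPoly H '' stdSimplex ℝ (Fin n)) :=
    (isCompact_stdSimplex ℝ (Fin n)).bddAbove_image (by unfold lagPoly; fun_prop)
  rw [lag_eq_sSup, lag_eq_sSup]
  refine Real.sSup_le ?_ (Real.sSup_nonneg ?_)
  · rintro _ ⟨x, hx, rfl⟩
    obtain ⟨y, hy, hxy⟩ := h x hx
    exact hxy.trans (le_csSup hbdd ⟨y, hy, rfl⟩)
  · rintro _ ⟨y, hy, rfl⟩
    exact lagPoly_nonneg H hy.1

lemma lag_le_lag_compression (i j : Fin n) (G : Finset (Finset (Fin n))) :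
    lag G ≤ lag (𝓒 {i} {j} G) := by
  refine lag_le_lag_of_forall fun x hx ↦ ?_
  rcases le_total (x j) (x i) with hij | hji
  · exact ⟨x, hx, lagPoly_le_lagPoly_compression hx.1 hij G⟩
  · refine ⟨x ∘ Equiv.swap i j, comp_perm_mem_stdSimplex hx _, ?_⟩
    calc lagPoly G x ≤ lagPoly (𝓒 {j} {i} G) x := lagPoly_le_lagPoly_compression hx.1 hji G
      _ = lagPoly (𝓒 {i} {j} G) (x ∘ Equiv.swap i j) := by
        rw [← map_compression_swap, lagPoly_map_perm]

lemma MtFree.mono {G H : Finset (Finset (Fin n))} (h : MtFree t G) (hHG : H ⊆ G) : MtFree t H :=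
  fun ⟨S, hS, hcard, hdisj⟩ ↦ h ⟨S, hS.trans hHG, hcard, hdisj⟩

lemma MtFree.compression {G : Finset (Finset (Fin n))} (h : MtFree t G) (i j : Fin n) :
    MtFree t (𝓒 {i} {j} G) := by
  rintro ⟨S, hS, hcard, hdisj⟩
  by_cases hSG : S ⊆ G
  · exact h ⟨S, hSG, hcard, hdisj⟩
  refine h ⟨S.map (Equiv.swap i j).finsetCongr.toEmbedding, ?_, by rw [card_map, hcard], ?_⟩
  · intro b hb
    obtain ⟨a, ha, rfl⟩ := mem_map.1 hb
    exact map_swap_mem_of_subset_compression hS hdisj hSG a ha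
  · simp only [forall_mem_map]
    intro a ha b hb hab
    simp only [Equiv.coe_toEmbedding, Equiv.finsetCongr_apply, disjoint_map]
    exact hdisj a ha b hb (by rintro rfl; exact hab rfl)

def weight (G : Finset (Finset (Fin n))) : ℕ := ∑ e ∈ G, ∑ v ∈ e, (v : ℕ)

lemma weight_mono {G H : Finset (Finset (Fin n))} (h : H ⊆ G) : weight H ≤ weight G :=
  sum_le_sum_of_subset h

lemma sum_val_map_swap_lt {i j : Fin n} (hij : i < j) {a : Finset (Fin n)} (hi : i ∉ a)
    (hj : j ∈ a) : ∑ v ∈ a.map (Equiv.swap i j).toEmbedding, (v : ℕ) < ∑ v ∈ a, (v : ℕ) := by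
  rw [sum_map]
  refine sum_lt_sum (fun v hv ↦ ?_) ⟨j, hj, by simpa using hij⟩
  rw [Equiv.coe_toEmbedding, swap_apply_of_mem_of_notMem hv hi]
  split_ifs with hvj
  · exact hvj ▸ hij.le
  · exact le_rfl

lemma sum_val_compress_le {i j : Fin n} (hij : i < j) (a : Finset (Fin n)) :
    ∑ v ∈ compress {i} {j} a, (v : ℕ) ≤ ∑ v ∈ a, (v : ℕ) := by
  rw [compress_singleton]
  split_ifs with h
  · exact (sum_val_map_swap_lt hij h.1 h.2).le
  · exact le_rfl

lemma weight_compression_lt {i j : Fin n} (hij : i < j) {G : Finset (Finset (Fin n))}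
    {e : Finset (Fin n)} (he : e ∈ G) (hi : i ∉ e) (hj : j ∈ e)
    (hσ : e.map (Equiv.swap i j).toEmbedding ∉ G) : weight (𝓒 {i} {j} G) < weight G := by
  rw [weight, weight, sum_compression]
  refine sum_lt_sum (fun a _ ↦ ?_) ⟨e, he, ?_⟩
  · split_ifs
    · exact le_rfl
    · exact sum_val_compress_le hij a
  · have hc : compress {i} {j} e = e.map (Equiv.swap i j).toEmbedding := by
      rw [compress_singleton, if_pos ⟨hi, hj⟩]
    rw [hc, if_neg hσ]
    exact sum_val_map_swap_lt hij hi hj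

lemma exists_weight_compression_lt {G : Finset (Finset (Fin n))} (h : ¬ LeftCompressed G) :
    ∃ i j : Fin n, weight (𝓒 {i} {j} G) < weight G := by
  simp only [LeftCompressed, not_forall] at h
  obtain ⟨e, he, i, j, hij, hj, hi, hnot⟩ := h
  exact ⟨i, j, weight_compression_lt hij he hi hj (by rwa [map_swap_eq_insert_erase hj hi])⟩

lemma exists_subset_lagDense (G : Finset (Finset (Fin n))) :
    ∃ H ⊆ G, lag G ≤ lag H ∧ LagDense H := by
  induction G using Finset.strongInduction with
  | H G ih =>
    by_cases hG : LagDense G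
    · exact ⟨G, subset_rfl, le_rfl, hG⟩
    simp only [LagDense, not_forall, not_lt] at hG
    obtain ⟨H, hHG, hle⟩ := hG
    obtain ⟨K, hKH, hle', hK⟩ := ih H hHG
    exact ⟨K, hKH.trans hHG.subset, hle.trans hle', hK⟩

theorem exists_leftCompressed_lagDense {r : ℕ} (G : Finset (Finset (Fin n)))
    (hG : (G : Set (Finset (Fin n))).Sized r) (hfree : MtFree t G) :
    ∃ G' : Finset (Finset (Fin n)), (G' : Set (Finset (Fin n))).Sized r ∧ MtFree t G' ∧
      LagDense G' ∧ LeftCompressed G' ∧ lag G ≤ lag G' := by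
  obtain ⟨H, hHG, hlag, hdense⟩ := exists_subset_lagDense G
  have hH : (H : Set (Finset (Fin n))).Sized r := hG.mono (coe_subset.2 hHG)
  by_cases hlc : LeftCompressed H
  · exact ⟨H, hH, hfree.mono hHG, hdense, hlc, hlag⟩
  obtain ⟨i, j, hw⟩ := exists_weight_compression_lt hlc
  have : weight (𝓒 {i} {j} H) < weight G := hw.trans_le (weight_mono hHG)
  obtain ⟨G', hG', hfree', hdense', hlc', hlag'⟩ := exists_leftCompressed_lagDense (𝓒 {i} {j} H)
    (hH.uvCompression (by simp)) ((hfree.mono hHG).compression i j)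
  exact ⟨G', hG', hfree', hdense', hlc', hlag.trans ((lag_le_lag_compression i j H).trans hlag')⟩
termination_by weight G

end Fin

/-- Every `M_t^r`-free `r`-graph `G` on `[n]` admits an `M_t^r`-free, dense and
left-compressed `r`-graph `G'` on at most `n` vertices with `λ(G') ≥ λ(G)`. -/
theorem exists_dense_left_compressed {n r t : ℕ} (G : Finset (Finset (Fin n)))
    (hG : ∀ e ∈ G, e.card = r) (hfree : MtFree t G) :
    ∃ n' ≤ n, ∃ G' : Finset (Finset (Fin n')),
      (∀ e ∈ G', e.card = r) ∧ MtFree t G' ∧ LagDense G' ∧ LeftCompressed G' ∧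
      lag G ≤ lag G' := by
  obtain ⟨G', hG', h⟩ := exists_leftCompressed_lagDense G (fun e he ↦ hG e he) hfree
  exact ⟨n, le_rfl, G', fun e he ↦ hG' he, h⟩
end

section
/- Let G be the 3-graph obtained from the complete 3-graph K_5^3 on 5 vertices by removing two edges that intersect in exactly two vertices (e.g., G = K_5^3 ∖ {{2,4,5},{3,4,5}} on vertex set [5]). Then λ(G) ≤ 0.0673 < 9/128. -/
open Finset

/-!
Vertices `1, 2` are twins in this hypergraph, and so are `3, 4`. Writing `a = x 0`,
`u = x 1 + x 2`, `v = x 3 + x 4`, AM-GM on each twin pair (`x 1 * x 2 ≤ u ^ 2 / 4`,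
`x 3 * x 4 ≤ v ^ 2 / 4`) bounds the Lagrangian polynomial by
`(a * (u ^ 2 + v ^ 2 + 4 * u * v) + u ^ 2 * v) / 4`, a cubic on the triangle `a + u + v = 1`
whose maximum is just below `0.2692 = 4 * 0.0673`.
-/

theorem lag_le_of_forall_le {n : ℕ} {G : Finset (Finset (Fin n))} {c : ℝ} (hc : 0 ≤ c)
    (h : ∀ x : Fin n → ℝ, (∀ i, 0 ≤ x i) → ∑ i, x i = 1 → ∑ e ∈ G, ∏ i ∈ e, x i ≤ c) :
    lag G ≤ c :=
  Real.sSup_le (by rintro _ ⟨x, hx, hsum, rfl⟩; exact h x hx hsum) hc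

theorem sum_prod_K53_sdiff (x : Fin 5 → ℝ) :
    ∑ e ∈ (univ : Finset (Fin 5)).powersetCard 3 \ {{1, 3, 4}, {2, 3, 4}}, ∏ i ∈ e, x i =
      x 0 * (x 1 * x 2 + (x 1 + x 2) * (x 3 + x 4) + x 3 * x 4) + x 1 * x 2 * (x 3 + x 4) := by
  have hG : (univ : Finset (Fin 5)).powersetCard 3 \ {{1, 3, 4}, {2, 3, 4}} =
      {{0, 1, 2}, {0, 1, 3}, {0, 1, 4}, {0, 2, 3}, {0, 2, 4}, {0, 3, 4}, {1, 2, 3}, {1, 2, 4}} := by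
    decide
  rw [hG]
  repeat rw [sum_insert (by decide)]
  rw [sum_singleton]
  repeat rw [prod_insert (by decide)]
  simp only [prod_singleton]
  ring

theorem twin_pairs_le {a b c d e : ℝ} (ha : 0 ≤ a) (hd : 0 ≤ d) (he : 0 ≤ e) :
    a * (b * c + (b + c) * (d + e) + d * e) + b * c * (d + e) ≤
      (a * ((b + c) ^ 2 + (d + e) ^ 2 + 4 * (b + c) * (d + e)) + (b + c) ^ 2 * (d + e)) / 4 := by
  have gap : (a * ((b + c) ^ 2 + (d + e) ^ 2 + 4 * (b + c) * (d + e)) + (b + c) ^ 2 * (d + e)) / 4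
      - (a * (b * c + (b + c) * (d + e) + d * e) + b * c * (d + e)) =
      ((a + d + e) * (b - c) ^ 2 + a * (d - e) ^ 2) / 4 := by
    ring
  have : 0 ≤ ((a + d + e) * (b - c) ^ 2 + a * (d - e) ^ 2) / 4 := by positivity
  linarith

-- The certificate is built around the approximate maximiser `(a, u, v) = (0.2621, 0.4373, 0.3006)`.
theorem cubic_on_triangle_le {a u v : ℝ} (ha : 0 ≤ a) (hu : 0 ≤ u) (hv : 0 ≤ v)
    (hs : a + u + v = 1) : a * (u ^ 2 + v ^ 2 + 4 * u * v) + u ^ 2 * v ≤ 0.2692 := by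
  obtain rfl : a = 1 - u - v := by linarith
  nlinarith [mul_nonneg ha (sq_nonneg (u - 0.4373)), mul_nonneg hu (sq_nonneg (v - 0.3006)),
    mul_nonneg hv (sq_nonneg (u - 0.4373)), mul_nonneg hu (sq_nonneg (u - 0.4373)),
    mul_nonneg hv (sq_nonneg (v - 0.3006)), mul_nonneg (mul_nonneg ha hu) hv]

/-- `K_5^3` minus two edges meeting in two vertices (vertices `0,…,4` standing for
`1,…,5`; the removed edges `{2,4,5}` and `{3,4,5}` become `{1,3,4}` and `{2,3,4}`).
Its Lagrangian is at most `0.0673 < 9/128`. -/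
theorem lagrangian_K53_minus_two_edges :
    lag (((Finset.univ : Finset (Fin 5)).powersetCard 3) \
        {({1, 3, 4} : Finset (Fin 5)), ({2, 3, 4} : Finset (Fin 5))}) ≤ 0.0673 ∧
    (0.0673 : ℝ) < 9 / 128 := by
  refine ⟨lag_le_of_forall_le (by norm_num) fun x hx hsum => ?_, by norm_num⟩
  rw [Fin.sum_univ_five] at hsum
  have hcubic := cubic_on_triangle_le (hx 0) (add_nonneg (hx 1) (hx 2))
    (add_nonneg (hx 3) (hx 4)) (by linarith)
  rw [sum_prod_K53_sdiff]
  linarith [twin_pairs_le (b := x 1) (c := x 2) (hx 0) (hx 3) (hx 4)]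
end

section
/- For every n ≥ 4, the Lagrangian of the star S_n satisfies λ(S_n) = 9(n−2)(n−3)/(512(n−1)²); consequently λ(S_n) → 9/512 as n → ∞. -/
open Finset

/-- The Lagrangian of a hypergraph `G` with vertex set `[n] = {1, …, n}`. -/
noncomputable def lagN (n : ℕ) (G : Finset (Finset ℕ)) : ℝ :=
  sSup {v : ℝ | ∃ x : ℕ → ℝ, (∀ i, 0 ≤ x i) ∧ (∑ i ∈ Finset.Icc 1 n, x i) = 1 ∧
    v = ∑ e ∈ G, ∏ i ∈ e, x i}

/-- The star `S_n`: all 4-element subsets of `[n]` containing the vertex `1`. -/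
def starS (n : ℕ) : Finset (Finset ℕ) :=
  ((Finset.Icc 1 n).powersetCard 4).filter (fun e => 1 ∈ e)

/-!
The polynomial of `S_n` is `x₁ · e₃(x₂, …, xₙ)`. With `m = n - 1` and `s = x₂ + ⋯ + xₙ = 1 - x₁`,
Maclaurin's inequality `e₃ ≤ C(m, 3) (s / m)³` bounds it by `C(m, 3) / m³ · (1 - s) s³
≤ C(m, 3) / m³ · 27 / 256`, with equality at `x₁ = 1 / 4` and `xᵢ = 3 / (4m)` otherwise.
Maclaurin's inequality for `e₃` comes from the expansion `s³ = Σ yᵢ³ + 3 Σ_{i ≠ j} yᵢ² yⱼ + 6 e₃`: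
summing `3abc ≤ a³ + b³ + c³` and `6abc ≤ Σ_{sym} a²b` over all triples bounds `e₃` by the first
two terms, and `m² = 1 + 3 (m - 1) + (m - 1) (m - 2)` balances the three.
-/

namespace Finset

variable {α β : Type*} [DecidableEq α]

lemma sum_powersetCard_succ_insert [AddCommMonoid β] {a : α} {s : Finset α}
    (ha : a ∉ s) (k : ℕ) (f : Finset α → β) :
    ∑ t ∈ (insert a s).powersetCard (k + 1), f t =
      ∑ t ∈ s.powersetCard (k + 1), f t + ∑ t ∈ s.powersetCard k, f (insert a t) := by
  rw [powersetCard_succ_insert ha, sum_union, sum_image]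
  · exact insert_erase_invOn.2.injOn.mono fun t ht ↦ notMem_mono (mem_powersetCard.1 ht).1 ha
  · aesop (add simp [disjoint_left, insert_subset_iff, mem_powersetCard])

lemma sum_powersetCard_succ_insert_prod {a : α} {s : Finset α} (ha : a ∉ s) (k : ℕ)
    (y : α → ℝ) :
    ∑ t ∈ (insert a s).powersetCard (k + 1), ∏ i ∈ t, y i =
      ∑ t ∈ s.powersetCard (k + 1), ∏ i ∈ t, y i
        + y a * ∑ t ∈ s.powersetCard k, ∏ i ∈ t, y i := by
  rw [sum_powersetCard_succ_insert ha, mul_sum]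
  congr 1
  refine sum_congr rfl fun t ht ↦ prod_insert fun hat ↦ ha ?_
  exact (mem_powersetCard.1 ht).1 hat

lemma sq_sum_eq (s : Finset α) (y : α → ℝ) :
    (∑ i ∈ s, y i) ^ 2 = ∑ i ∈ s, y i ^ 2 + 2 * ∑ t ∈ s.powersetCard 2, ∏ i ∈ t, y i := by
  induction s using Finset.induction_on with
  | empty => simp; rfl
  | @insert a s ha ih =>
    rw [sum_powersetCard_succ_insert_prod ha, powersetCard_one, sum_map, sum_insert ha,
      sum_insert ha]
    simp only [Function.Embedding.coeFn_mk, prod_singleton]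
    linear_combination ih

lemma pow_three_sum_eq (s : Finset α) (y : α → ℝ) :
    (∑ i ∈ s, y i) ^ 3 = ∑ i ∈ s, y i ^ 3 + 3 * ∑ i ∈ s, ∑ j ∈ s.erase i, y i ^ 2 * y j
      + 6 * ∑ t ∈ s.powersetCard 3, ∏ i ∈ t, y i := by
  induction s using Finset.induction_on with
  | empty => simp; rfl
  | @insert a s ha ih =>
    have hQ : ∑ i ∈ insert a s, ∑ j ∈ (insert a s).erase i, y i ^ 2 * y j
        = y a ^ 2 * ∑ j ∈ s, y j
          + ∑ i ∈ s, (y i ^ 2 * y a + ∑ j ∈ s.erase i, y i ^ 2 * y j) := by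
      rw [sum_insert ha, erase_insert ha, mul_sum]
      congr 1
      refine sum_congr rfl fun i hi ↦ ?_
      rw [erase_insert_of_ne (ne_of_mem_of_not_mem hi ha).symm,
        sum_insert fun h ↦ ha (mem_of_mem_erase h)]
    rw [sum_powersetCard_succ_insert_prod ha, sum_insert ha, sum_insert ha, hQ,
      sum_add_distrib, ← sum_mul]
    linear_combination ih + 3 * y a * sq_sum_eq s y

lemma sum_powersetCard_sum [AddCommMonoid β] (s : Finset α) (k : ℕ) (g : α → β) :
    ∑ t ∈ s.powersetCard (k + 1), ∑ i ∈ t, g i = (#s - 1).choose k • ∑ i ∈ s, g i := by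
  calc ∑ t ∈ s.powersetCard (k + 1), ∑ i ∈ t, g i
      = ∑ i ∈ s, ∑ t ∈ s.powersetCard (k + 1), if {i} ⊆ t then g i else 0 := by
        rw [sum_comm]
        refine sum_congr rfl fun t ht ↦ ?_
        simp only [singleton_subset_iff]
        rw [sum_ite_mem, inter_eq_right.2 (mem_powersetCard.1 ht).1]
    _ = (#s - 1).choose k • ∑ i ∈ s, g i := by
        rw [smul_sum]
        refine sum_congr rfl fun i hi ↦ ?_
        rw [← sum_filter, sum_const, card_filter_powersetCard_subset _ _ _
          (singleton_subset_iff.2 hi) (by simp)]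
        simp

lemma sum_powersetCard_sum_sum_erase [AddCommMonoid β] (s : Finset α) (k : ℕ) (f : α → α → β) :
    ∑ t ∈ s.powersetCard (k + 2), ∑ i ∈ t, ∑ j ∈ t.erase i, f i j
      = (#s - 2).choose k • ∑ i ∈ s, ∑ j ∈ s.erase i, f i j := by
  calc ∑ t ∈ s.powersetCard (k + 2), ∑ i ∈ t, ∑ j ∈ t.erase i, f i j
      = ∑ t ∈ s.powersetCard (k + 2), ∑ i ∈ s, ∑ j ∈ s.erase i,
          if {i, j} ⊆ t then f i j else 0 := by
        refine sum_congr rfl fun t ht ↦ ?_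
        simp only [insert_subset_iff, singleton_subset_iff, ite_and, sum_ite_irrel,
          sum_const_zero, sum_ite_mem, erase_inter, inter_eq_right.2 (mem_powersetCard.1 ht).1]
    _ = (#s - 2).choose k • ∑ i ∈ s, ∑ j ∈ s.erase i, f i j := by
        rw [sum_comm, smul_sum]
        refine sum_congr rfl fun i hi ↦ ?_
        rw [sum_comm, smul_sum]
        refine sum_congr rfl fun j hj ↦ ?_
        have hji := mem_erase.1 hj
        rw [← sum_filter, sum_const, card_filter_powersetCard_subset _ _ _
          (insert_subset hi (singleton_subset_iff.2 hji.2))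
          (by rw [card_pair hji.1.symm]; omega), card_pair hji.1.symm]
        simp

lemma three_mul_prod_le_sum_pow_three {t : Finset α} (ht : #t = 3) {y : α → ℝ}
    (hy : ∀ i ∈ t, 0 ≤ y i) : 3 * ∏ i ∈ t, y i ≤ ∑ i ∈ t, y i ^ 3 := by
  obtain ⟨a, b, c, hab, hac, hbc, rfl⟩ := card_eq_three.1 ht
  simp only [mem_insert, mem_singleton, forall_eq_or_imp, forall_eq] at hy
  obtain ⟨ha, hb, hc⟩ := hy
  simp only [mem_insert, hab, mem_singleton, hac, or_self, not_false_eq_true, prod_insert, hbc,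
    prod_singleton, sum_insert, sum_singleton]
  nlinarith [mul_nonneg (add_nonneg (add_nonneg ha hb) hc) (sq_nonneg (y a - y b)),
    mul_nonneg (add_nonneg (add_nonneg ha hb) hc) (sq_nonneg (y b - y c)),
    mul_nonneg (add_nonneg (add_nonneg ha hb) hc) (sq_nonneg (y a - y c))]

lemma six_mul_prod_le_sum_sum_erase {t : Finset α} (ht : #t = 3) {y : α → ℝ}
    (hy : ∀ i ∈ t, 0 ≤ y i) : 6 * ∏ i ∈ t, y i ≤ ∑ i ∈ t, ∑ j ∈ t.erase i, y i ^ 2 * y j := by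
  obtain ⟨a, b, c, hab, hac, hbc, rfl⟩ := card_eq_three.1 ht
  simp only [mem_insert, mem_singleton, forall_eq_or_imp, forall_eq] at hy
  obtain ⟨ha, hb, hc⟩ := hy
  simp only [mem_insert, hab, mem_singleton, hac, or_self, not_false_eq_true, prod_insert, hbc,
    prod_singleton, sum_insert, erase_insert_eq_erase, erase_eq_of_notMem, sum_singleton, ne_eq,
    erase_insert_of_ne, erase_singleton, insert_empty_eq]
  nlinarith [mul_nonneg ha (sq_nonneg (y b - y c)), mul_nonneg hb (sq_nonneg (y a - y c)),
    mul_nonneg hc (sq_nonneg (y a - y b))]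

lemma maclaurin_three (s : Finset α) {y : α → ℝ} (hy : ∀ i ∈ s, 0 ≤ y i) :
    6 * (#s : ℝ) ^ 2 * ∑ t ∈ s.powersetCard 3, ∏ i ∈ t, y i
      ≤ ((#s : ℝ) - 1) * ((#s : ℝ) - 2) * (∑ i ∈ s, y i) ^ 3 := by
  rcases lt_or_ge #s 3 with hs | hs
  · have hsum : 0 ≤ ∑ i ∈ s, y i := sum_nonneg hy
    have hM : 0 ≤ ((#s : ℝ) - 1) * ((#s : ℝ) - 2) := by
      rcases le_or_gt #s 1 with h | h
      · have : (#s : ℝ) ≤ 1 := by exact_mod_cast h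
        nlinarith
      · have : (2 : ℝ) ≤ #s := by exact_mod_cast h
        nlinarith
    rw [powersetCard_eq_empty.2 hs, sum_empty, mul_zero]
    exact mul_nonneg hM (pow_nonneg hsum 3)
  set E : ℝ := ∑ t ∈ s.powersetCard 3, ∏ i ∈ t, y i
  set P : ℝ := ∑ i ∈ s, y i ^ 3
  set Q : ℝ := ∑ i ∈ s, ∑ j ∈ s.erase i, y i ^ 2 * y j
  have hM : (3 : ℝ) ≤ #s := by exact_mod_cast hs
  set M : ℝ := (#s : ℝ)
  have hP : 6 * E ≤ (M - 1) * (M - 2) * P := by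
    have h : 3 * E ≤ ((#s - 1).choose 2 : ℕ) * P := by
      rw [← nsmul_eq_mul, ← sum_powersetCard_sum, mul_sum]
      exact sum_le_sum fun t ht ↦ three_mul_prod_le_sum_pow_three (mem_powersetCard.1 ht).2
        fun i hi ↦ hy i ((mem_powersetCard.1 ht).1 hi)
    rw [Nat.cast_choose_two, Nat.cast_sub (by omega), Nat.cast_one] at h
    linarith
  have hQ : 6 * E ≤ (M - 2) * Q := by
    have h : 6 * E ≤ ((#s - 2).choose 1 : ℕ) * Q := by
      rw [← nsmul_eq_mul, ← sum_powersetCard_sum_sum_erase, mul_sum]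
      exact sum_le_sum fun t ht ↦ six_mul_prod_le_sum_sum_erase (mem_powersetCard.1 ht).2
        fun i hi ↦ hy i ((mem_powersetCard.1 ht).1 hi)
    rwa [Nat.choose_one_right, Nat.cast_sub (by omega), Nat.cast_two] at h
  have hcube := pow_three_sum_eq s y
  have hQ' := mul_le_mul_of_nonneg_left hQ (by linarith : (0 : ℝ) ≤ 3 * (M - 1))
  linear_combination hP + hQ' - (M - 1) * (M - 2) * hcube

end Finset

lemma lagN_eq_of_le_of_exists_eq {n : ℕ} {G : Finset (Finset ℕ)} {v : ℝ}
    (hle : ∀ x : ℕ → ℝ, (∀ i, 0 ≤ x i) → ∑ i ∈ Icc 1 n, x i = 1 →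
      ∑ e ∈ G, ∏ i ∈ e, x i ≤ v)
    (hv : ∃ x : ℕ → ℝ, (∀ i, 0 ≤ x i) ∧ ∑ i ∈ Icc 1 n, x i = 1 ∧
      ∑ e ∈ G, ∏ i ∈ e, x i = v) :
    lagN n G = v := by
  obtain ⟨x, hx, hx1, rfl⟩ := hv
  refine IsGreatest.csSup_eq ⟨⟨x, hx, hx1, rfl⟩, ?_⟩
  rintro _ ⟨x', hx', hx'1, rfl⟩
  exact hle x' hx' hx'1

lemma Icc_one_eq_insert_Icc_two {n : ℕ} (hn : 1 ≤ n) : Icc 1 n = insert 1 (Icc 2 n) :=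
  (insert_Icc_add_one_left_eq_Icc hn).symm

lemma sum_Icc_one_eq_add {n : ℕ} (hn : 1 ≤ n) (x : ℕ → ℝ) :
    ∑ i ∈ Icc 1 n, x i = x 1 + ∑ i ∈ Icc 2 n, x i := by
  rw [Icc_one_eq_insert_Icc_two hn, sum_insert (by simp)]

lemma sum_starS_prod {n : ℕ} (hn : 1 ≤ n) (x : ℕ → ℝ) :
    ∑ e ∈ starS n, ∏ i ∈ e, x i = x 1 * ∑ t ∈ (Icc 2 n).powersetCard 3, ∏ i ∈ t, x i := by
  have h1 {k : ℕ} {t : Finset ℕ} (ht : t ∈ (Icc 2 n).powersetCard k) : 1 ∉ t := fun h ↦ by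
    simpa using (mem_powersetCard.1 ht).1 h
  rw [starS, sum_filter, Icc_one_eq_insert_Icc_two hn,
    sum_powersetCard_succ_insert (β := ℝ) (k := 3) (by simp),
    sum_eq_zero fun t ht ↦ if_neg (h1 ht), zero_add, mul_sum]
  refine sum_congr rfl fun t ht ↦ ?_
  rw [if_pos (mem_insert_self 1 t), prod_insert (h1 ht)]

lemma Nat.cast_choose_three (K : Type*) [Field K] [CharZero K] (a : ℕ) :
    (a.choose 3 : K) = a * (a - 1) * (a - 2) / 6 := by
  rw [Nat.cast_choose_eq_descPochhammer_div]
  simp only [descPochhammer_succ_eval, descPochhammer_one, Polynomial.eval_X, Nat.cast_one,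
    Nat.cast_ofNat, Nat.factorial, Nat.succ_eq_add_one, Nat.reduceAdd, zero_add, mul_one,
    Nat.reduceMul]

lemma one_sub_mul_pow_three_le (s : ℝ) : (1 - s) * s ^ 3 ≤ 27 / 256 := by
  nlinarith [mul_nonneg (sq_nonneg (4 * s - 3)) (sq_nonneg (4 * s + 1)), sq_nonneg (4 * s - 3)]

lemma sum_starS_prod_le {n : ℕ} (hn : 4 ≤ n) {x : ℕ → ℝ} (hx : ∀ i, 0 ≤ x i)
    (hx1 : ∑ i ∈ Icc 1 n, x i = 1) :
    ∑ e ∈ starS n, ∏ i ∈ e, x i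
      ≤ 9 * ((n : ℝ) - 2) * ((n : ℝ) - 3) / (512 * ((n : ℝ) - 1) ^ 2) := by
  have hN : (4 : ℝ) ≤ n := by exact_mod_cast hn
  rw [sum_Icc_one_eq_add (by omega)] at hx1
  rw [sum_starS_prod (by omega), le_div_iff₀ (by nlinarith)]
  set s := ∑ i ∈ Icc 2 n, x i
  set E := ∑ t ∈ (Icc 2 n).powersetCard 3, ∏ i ∈ t, x i
  have hE : 6 * ((n : ℝ) - 1) ^ 2 * E ≤ ((n : ℝ) - 2) * ((n : ℝ) - 3) * s ^ 3 := by
    have h := maclaurin_three (Icc 2 n) fun i _ ↦ hx i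
    rw [Nat.card_Icc, Nat.cast_sub (by omega)] at h
    push_cast at h
    linear_combination h
  calc x 1 * E * (512 * ((n : ℝ) - 1) ^ 2) = 256 / 3 * x 1 * (6 * ((n : ℝ) - 1) ^ 2 * E) := by
        ring
    _ ≤ 256 / 3 * x 1 * (((n : ℝ) - 2) * ((n : ℝ) - 3) * s ^ 3) :=
        mul_le_mul_of_nonneg_left hE (by linarith [hx 1])
    _ = 256 / 3 * (((n : ℝ) - 2) * ((n : ℝ) - 3)) * ((1 - s) * s ^ 3) := by
        rw [← hx1]
        ring
    _ ≤ 256 / 3 * (((n : ℝ) - 2) * ((n : ℝ) - 3)) * (27 / 256) :=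
        mul_le_mul_of_nonneg_left (one_sub_mul_pow_three_le s) (by nlinarith)
    _ = 9 * ((n : ℝ) - 2) * ((n : ℝ) - 3) := by ring

lemma exists_sum_starS_prod_eq {n : ℕ} (hn : 4 ≤ n) :
    ∃ x : ℕ → ℝ, (∀ i, 0 ≤ x i) ∧ ∑ i ∈ Icc 1 n, x i = 1 ∧
      ∑ e ∈ starS n, ∏ i ∈ e, x i
        = 9 * ((n : ℝ) - 2) * ((n : ℝ) - 3) / (512 * ((n : ℝ) - 1) ^ 2) := by
  have hN : (4 : ℝ) ≤ n := by exact_mod_cast hn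
  have hn1 : (n : ℝ) - 1 ≠ 0 := by linarith
  set c : ℝ := 3 / (4 * ((n : ℝ) - 1))
  have hc : 0 < c := div_pos (by norm_num) (by linarith)
  have hxc {i : ℕ} (hi : i ∈ Icc 2 n) : (if i = 1 then 1 / 4 else c) = c :=
    if_neg (by simp at hi; omega)
  have hcard : ((#(Icc 2 n) : ℕ) : ℝ) = n - 1 := by
    rw [Nat.card_Icc, Nat.cast_sub (by omega)]
    push_cast
    ring
  refine ⟨fun i ↦ if i = 1 then 1 / 4 else c, fun i ↦ ?_, ?_, ?_⟩
  · dsimp only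
    split_ifs <;> positivity
  · rw [sum_Icc_one_eq_add (by omega), sum_congr rfl fun i ↦ hxc, sum_const, nsmul_eq_mul,
      hcard, if_pos rfl]
    simp only [c]
    field_simp
    ring
  · rw [sum_starS_prod (by omega), sum_congr rfl fun t ht ↦ prod_congr rfl fun i hi ↦
      hxc ((mem_powersetCard.1 ht).1 hi),
      sum_congr rfl fun t ht ↦ by rw [prod_const, (mem_powersetCard.1 ht).2], sum_const,
      card_powersetCard, nsmul_eq_mul, Nat.cast_choose_three, hcard, if_pos rfl]
    simp only [c]
    field_simp
    ring

open Filter Topology in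
lemma tendsto_star_value :
    Tendsto (fun n : ℕ ↦ 9 * ((n : ℝ) - 2) * ((n : ℝ) - 3) / (512 * ((n : ℝ) - 1) ^ 2))
      atTop (𝓝 (9 / 512)) := by
  have hu : Tendsto (fun n : ℕ ↦ ((n : ℝ) - 1)⁻¹) atTop (𝓝 0) :=
    (tendsto_atTop_add_const_right _ (-1) tendsto_natCast_atTop_atTop).inv_tendsto_atTop
  have hg : Tendsto (fun u : ℝ ↦ 9 / 512 * (1 - u) * (1 - 2 * u)) (𝓝 0) (𝓝 (9 / 512)) := by
    simpa using (by fun_prop : Continuous fun u : ℝ ↦ 9 / 512 * (1 - u) * (1 - 2 * u)).tendsto 0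
  refine (hg.comp hu).congr' ?_
  filter_upwards [eventually_ge_atTop 2] with n hn
  have hn1 : (n : ℝ) - 1 ≠ 0 := by
    have : (2 : ℝ) ≤ n := by exact_mod_cast hn
    linarith
  simp only [Function.comp_apply]
  field_simp
  ring

/-- For every `n ≥ 4`, `λ(S_n) = 9(n-2)(n-3)/(512(n-1)²)`, and `λ(S_n) → 9/512`
as `n → ∞`. -/
theorem lagrangian_star :
    (∀ n : ℕ, 4 ≤ n →
      lagN n (starS n) =
        9 * ((n : ℝ) - 2) * ((n : ℝ) - 3) / (512 * ((n : ℝ) - 1) ^ 2)) ∧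
    Filter.Tendsto (fun n : ℕ => lagN n (starS n)) Filter.atTop (nhds (9 / 512)) := by
  have hlag (n : ℕ) (hn : 4 ≤ n) :
      lagN n (starS n) = 9 * ((n : ℝ) - 2) * ((n : ℝ) - 3) / (512 * ((n : ℝ) - 1) ^ 2) :=
    lagN_eq_of_le_of_exists_eq (fun _ hx hx1 ↦ sum_starS_prod_le hn hx hx1)
      (exists_sum_starS_prod_eq hn)
  refine ⟨hlag, tendsto_star_value.congr' ?_⟩
  filter_upwards [Filter.eventually_ge_atTop 4] with n hn using (hlag n hn).symm
end

section
/- Let n ≥ 8 and let F₃ be the 4-graph on [n] with edge set {{1,2,i,j} : 3 ≤ i < j ≤ n} ∪ {{1,3,i,j} : 4 ≤ i < j ≤ n} ∪ {{1,4,5,6}} ∪ {{2,3,i,j} : 4 ≤ i < j ≤ n} ∪ {{2,4,5,6}}. Then λ(F₃) ≤ 1/64 < 0.0169. -/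
/-!
Put `u = x₁ + x₂` and let `T` be the weight on `{4, …, n}`. Grouping the edges of `F₃` by the
vertices they take from `{1, 2, 3}` gives
`λ(F₃, x) ≤ x₁x₂ e₂(x₃, …, xₙ) + u x₃ e₂(x₄, …, xₙ) + u x₄x₅x₆`.
With `2e₂ ≤ (∑ xᵢ)²`, `4x₁x₂ ≤ u²` and AM-GM `27x₄x₅x₆ ≤ T³`, the right-hand side is at most a
polynomial in `u`, `x₃` and `T`; maximising first over the split of `1 - u` into `x₃` and `T`
leaves a one-variable inequality in `u`.
-/

open Finset

/-- The edges `{a, b, i, j}` over all 2-element subsets `{i, j}` of `s`. -/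
def pairsWith (a b : ℕ) (s : Finset ℕ) : Finset (Finset ℕ) :=
  (s.powersetCard 2).image (fun p => insert a (insert b p))

/-- The edges `{a, i, j, k}` over all 3-element subsets `{i, j, k}` of `s`. -/
def triplesWith (a : ℕ) (s : Finset ℕ) : Finset (Finset ℕ) :=
  (s.powersetCard 3).image (insert a)

/-- The edges `{a, b, c, k}` over all `k ∈ s`. -/
def singlesWith (a b c : ℕ) (s : Finset ℕ) : Finset (Finset ℕ) :=
  s.image (fun k => ({a, b, c, k} : Finset ℕ))

/-- The 4-graph `F₃` on `[n]`. -/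
def F3 (n : ℕ) : Finset (Finset ℕ) :=
  pairsWith 1 2 (Finset.Icc 3 n) ∪ pairsWith 1 3 (Finset.Icc 4 n) ∪
    {({1, 4, 5, 6} : Finset ℕ)} ∪ pairsWith 2 3 (Finset.Icc 4 n) ∪
    {({2, 4, 5, 6} : Finset ℕ)}

lemma lagN_le {n : ℕ} {G : Finset (Finset ℕ)} {c : ℝ} (hc : 0 ≤ c)
    (h : ∀ x : ℕ → ℝ, (∀ i, 0 ≤ x i) → ∑ i ∈ Icc 1 n, x i = 1 → ∑ e ∈ G, ∏ i ∈ e, x i ≤ c) :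
    lagN n G ≤ c :=
  Real.sSup_le (by rintro v ⟨x, hx, hsum, rfl⟩; exact h x hx hsum) hc

lemma Finset.sum_union_le_add {α : Type*} [DecidableEq α] {f : α → ℝ} (hf : ∀ a, 0 ≤ f a)
    (s t : Finset α) : ∑ a ∈ s ∪ t, f a ≤ ∑ a ∈ s, f a + ∑ a ∈ t, f a := by
  rw [← sum_union_inter]
  exact le_add_of_nonneg_right (sum_nonneg fun a _ => hf a)

lemma Finset.two_mul_sum_powersetCard_two_prod_le_sq {α : Type*} [DecidableEq α] {x : α → ℝ}
    (s : Finset α) (hx : ∀ i ∈ s, 0 ≤ x i) :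
    2 * ∑ p ∈ s.powersetCard 2, ∏ i ∈ p, x i ≤ (∑ i ∈ s, x i) ^ 2 := by
  induction s using Finset.induction_on with
  | empty => rw [powersetCard_eq_empty.2 (by simp)]; simp
  | @insert a s ha ih =>
    have hs : ∀ i ∈ s, 0 ≤ x i := fun i hi => hx i (mem_insert_of_mem hi)
    have hinsert : ∑ p ∈ (s.powersetCard 1).image (insert a), ∏ i ∈ p, x i
        = x a * ∑ i ∈ s, x i := by
      rw [sum_image (insert_erase_invOn.2.injOn.mono fun p hp => ?_), powersetCard_one, sum_map,
        mul_sum]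
      · refine sum_congr rfl fun i hi => ?_
        rw [Function.Embedding.coeFn_mk, prod_insert (by grind), prod_singleton]
      · grind
    have hdisj : Disjoint (s.powersetCard 2) ((s.powersetCard 1).image (insert a)) := by
      grind [disjoint_left]
    rw [powersetCard_succ_insert ha, sum_union hdisj, hinsert, sum_insert ha]
    nlinarith [ih hs, hx a (mem_insert_self a s), sum_nonneg hs, sq_nonneg (x a)]

lemma sum_pairsWith_prod {R : Type*} [CommSemiring R] (x : ℕ → R) {a b : ℕ} {s : Finset ℕ}
    (hab : a ≠ b) (has : a ∉ s) (hbs : b ∉ s) :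
    ∑ e ∈ pairsWith a b s, ∏ i ∈ e, x i
      = x a * x b * ∑ p ∈ s.powersetCard 2, ∏ i ∈ p, x i := by
  have hb : ∀ p ∈ s.powersetCard 2, b ∉ p := fun p hp h => hbs (mem_powersetCard.1 hp |>.1 h)
  have ha : ∀ p ∈ s.powersetCard 2, a ∉ insert b p := by grind
  rw [pairsWith, sum_image, mul_sum]
  · exact sum_congr rfl fun p hp => by rw [prod_insert (ha p hp), prod_insert (hb p hp), mul_assoc]
  · intro p hp q hq hpq
    exact insert_erase_invOn.2.injOn (hb p hp) (hb q hq)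
      (insert_erase_invOn.2.injOn (ha p hp) (ha q hq) hpq)

lemma sum_F3_prod_le (x : ℕ → ℝ) (hx : ∀ i, 0 ≤ x i) (n : ℕ) :
    ∑ e ∈ F3 n, ∏ i ∈ e, x i ≤
      x 1 * x 2 * ∑ p ∈ (Icc 3 n).powersetCard 2, ∏ i ∈ p, x i
        + (x 1 + x 2) * x 3 * ∑ p ∈ (Icc 4 n).powersetCard 2, ∏ i ∈ p, x i
        + (x 1 + x 2) * (x 4 * x 5 * x 6) := by
  have h := sum_union_le_add (f := fun e : Finset ℕ => ∏ i ∈ e, x i)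
    fun e => prod_nonneg fun i _ => hx i
  set A := pairsWith 1 2 (Icc 3 n)
  set B := pairsWith 1 3 (Icc 4 n)
  set C : Finset (Finset ℕ) := {{1, 4, 5, 6}}
  set D := pairsWith 2 3 (Icc 4 n)
  set E : Finset (Finset ℕ) := {{2, 4, 5, 6}}
  have hA : ∑ e ∈ A, ∏ i ∈ e, x i = _ := sum_pairsWith_prod x (by decide) (by simp) (by simp)
  have hB : ∑ e ∈ B, ∏ i ∈ e, x i = _ := sum_pairsWith_prod x (by decide) (by simp) (by simp)
  have hD : ∑ e ∈ D, ∏ i ∈ e, x i = _ := sum_pairsWith_prod x (by decide) (by simp) (by simp)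
  have hC : ∑ e ∈ C, ∏ i ∈ e, x i = x 1 * (x 4 * x 5 * x 6) := by simp [C, mul_assoc]
  have hE : ∑ e ∈ E, ∏ i ∈ e, x i = x 2 * (x 4 * x 5 * x 6) := by simp [E, mul_assoc]
  have := h (A ∪ B ∪ C ∪ D) E
  have := h (A ∪ B ∪ C) D
  have := h (A ∪ B) C
  have := h A B
  simp only [F3]
  linarith

lemma twentyseven_mul_mul_le_add_add_pow_three {a b c : ℝ} (ha : 0 ≤ a) (hb : 0 ≤ b)
    (hc : 0 ≤ c) : 27 * (a * b * c) ≤ (a + b + c) ^ 3 := by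
  nlinarith [sq_nonneg (a - b), sq_nonneg (b - c), sq_nonneg (a - c),
    mul_nonneg ha hb, mul_nonneg hb hc, mul_nonneg ha hc]

-- Equality when `18c = 7T`.
lemma mul_sq_div_two_add_cube_div_le {c T : ℝ} (hc : 0 ≤ c) (hT : 0 ≤ T) :
    c * T ^ 2 / 2 + T ^ 3 / 27 ≤ 54 * (c + T) ^ 3 / 625 := by
  nlinarith [mul_nonneg hT (sq_nonneg (18 * c - 7 * T)), mul_nonneg hc (sq_nonneg (18 * c - 7 * T)),
    mul_nonneg hc (mul_nonneg hc hT), pow_nonneg hc 3]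

lemma sq_mul_sq_div_add_mul_cube_le {u s : ℝ} (hu : 0 ≤ u) (hs : 0 ≤ s) (hus : u + s = 1) :
    u ^ 2 * s ^ 2 / 8 + 54 * u * s ^ 3 / 625 ≤ 1 / 64 := by
  nlinarith [sq_nonneg (s - 5 / 8), mul_nonneg hu (sq_nonneg (s - 5 / 8)),
    mul_nonneg hs (sq_nonneg (s - 5 / 8)), sq_nonneg (u * s - 15 / 64), mul_nonneg hu hs]

lemma sum_F3_prod_le_one_div_64 {n : ℕ} (hn : 6 ≤ n) (x : ℕ → ℝ) (hx : ∀ i, 0 ≤ x i)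
    (hsum : ∑ i ∈ Icc 1 n, x i = 1) : ∑ e ∈ F3 n, ∏ i ∈ e, x i ≤ 1 / 64 := by
  set T := ∑ i ∈ Icc 4 n, x i
  set E3 := ∑ p ∈ (Icc 3 n).powersetCard 2, ∏ i ∈ p, x i
  set E4 := ∑ p ∈ (Icc 4 n).powersetCard 2, ∏ i ∈ p, x i
  have hT : 0 ≤ T := sum_nonneg fun i _ => hx i
  have hIcc : ∀ a, a ≤ n → Icc a n = insert a (Icc (a + 1) n) :=
    fun a ha => (insert_Icc_add_one_left_eq_Icc ha).symm
  have hx3T : ∑ i ∈ Icc 3 n, x i = x 3 + T := by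
    rw [hIcc 3 (by omega), sum_insert (by simp)]
  have hx123T : x 1 + x 2 + x 3 + T = 1 := by
    rw [hIcc 1 (by omega), sum_insert (by simp), hIcc 2 (by omega), sum_insert (by simp),
      hx3T] at hsum
    linarith
  have hE3 : 2 * E3 ≤ (x 3 + T) ^ 2 :=
    hx3T ▸ two_mul_sum_powersetCard_two_prod_le_sq _ fun i _ => hx i
  have hE4 : 2 * E4 ≤ T ^ 2 := two_mul_sum_powersetCard_two_prod_le_sq _ fun i _ => hx i
  have hx456 : x 4 + x 5 + x 6 ≤ T := by
    simpa [sum_insert, ← add_assoc] using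
      sum_le_sum_of_subset_of_nonneg (s := {4, 5, 6}) (t := Icc 4 n)
        (fun i hi => by simp at hi ⊢; omega) fun i _ _ => hx i
  have hP : 27 * (x 4 * x 5 * x 6) ≤ T ^ 3 :=
    (twentyseven_mul_mul_le_add_add_pow_three (hx 4) (hx 5) (hx 6)).trans
      (pow_le_pow_left₀ (add_nonneg (add_nonneg (hx 4) (hx 5)) (hx 6)) hx456 3)
  have hp : 4 * (x 1 * x 2) ≤ (x 1 + x 2) ^ 2 := by rw [← mul_assoc]; exact four_mul_le_sq_add ..
  have hu : 0 ≤ x 1 + x 2 := add_nonneg (hx 1) (hx 2)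
  have h12 : x 1 * x 2 * E3 ≤ (x 1 + x 2) ^ 2 / 4 * ((x 3 + T) ^ 2 / 2) :=
    mul_le_mul (by linarith) (by linarith)
      (sum_nonneg fun p _ => prod_nonneg fun i _ => hx i) (by positivity)
  have h3 : x 3 * E4 + x 4 * x 5 * x 6 ≤ 54 * (x 3 + T) ^ 3 / 625 := by
    have := mul_le_mul_of_nonneg_left hE4 (hx 3)
    linarith [mul_sq_div_two_add_cube_div_le (hx 3) hT]
  have := sq_mul_sq_div_add_mul_cube_le hu (add_nonneg (hx 3) hT) (by linarith)
  refine (sum_F3_prod_le x hx n).trans ?_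
  linarith [mul_le_mul_of_nonneg_left h3 hu]

/-- For `n ≥ 8`, `λ(F₃) ≤ 1/64 < 0.0169`. -/
theorem lagrangian_F3 (n : ℕ) (hn : 8 ≤ n) :
    lagN n (F3 n) ≤ 1 / 64 ∧ (1 / 64 : ℝ) < 0.0169 :=
  ⟨lagN_le (by norm_num) (sum_F3_prod_le_one_div_64 (by omega)), by norm_num⟩
end

section
/- Let n ≥ 8 and let F₁₀ be the 4-graph on [n] with edge set {{1,2,i,j} : 3 ≤ i < j ≤ n} ∪ {{1,3,4,k} : 5 ≤ k ≤ n} ∪ {{1,3,5,l} : 6 ≤ l ≤ n} ∪ {{1,3,6,m} : 7 ≤ m ≤ n} ∪ {{1,4,5,l} : 6 ≤ l ≤ n} ∪ {{1,4,6,m} : 7 ≤ m ≤ n} ∪ {{1,5,6,m} : 7 ≤ m ≤ n} ∪ {{2,3,4,5}, {2,3,4,6}, {2,3,4,7}, {2,3,5,6}, {2,4,5,6}}. Then λ(F₁₀) ≤ 2/135 < 0.0169. -/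
open Finset

/-- The 4-graph `F₁₀` on `[n]`. -/
def F10 (n : ℕ) : Finset (Finset ℕ) :=
  pairsWith 1 2 (Finset.Icc 3 n) ∪ singlesWith 1 3 4 (Finset.Icc 5 n) ∪
    singlesWith 1 3 5 (Finset.Icc 6 n) ∪ singlesWith 1 3 6 (Finset.Icc 7 n) ∪
    singlesWith 1 4 5 (Finset.Icc 6 n) ∪ singlesWith 1 4 6 (Finset.Icc 7 n) ∪
    singlesWith 1 5 6 (Finset.Icc 7 n) ∪
    {({2, 3, 4, 5} : Finset ℕ), ({2, 3, 4, 6} : Finset ℕ), ({2, 3, 4, 7} : Finset ℕ),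
      ({2, 3, 5, 6} : Finset ℕ), ({2, 4, 5, 6} : Finset ℕ)}

/-! ### Auxiliary lemmas -/

lemma sum_insert_le' {α : Type*} [DecidableEq α] (f : α → ℝ) (hf : ∀ e, 0 ≤ f e)
    (a : α) (s : Finset α) : ∑ e ∈ insert a s, f e ≤ f a + ∑ e ∈ s, f e := by
  by_cases h : a ∈ s
  · rw [Finset.insert_eq_self.2 h]
    have := hf a; linarith
  · rw [Finset.sum_insert h]

lemma sum_union_le' {α : Type*} [DecidableEq α] (f : α → ℝ) (hf : ∀ e, 0 ≤ f e)
    (s t : Finset α) : ∑ e ∈ s ∪ t, f e ≤ ∑ e ∈ s, f e + ∑ e ∈ t, f e := by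
  rw [← Finset.union_sdiff_self_eq_union, Finset.sum_union Finset.disjoint_sdiff]
  have : ∑ e ∈ t \ s, f e ≤ ∑ e ∈ t, f e :=
    Finset.sum_le_sum_of_subset_of_nonneg (Finset.sdiff_subset) (fun i _ _ => hf i)
  linarith

lemma sum_image_le' {α β : Type*} [DecidableEq α] [DecidableEq β] (f : β → ℝ)
    (hf : ∀ e, 0 ≤ f e) (g : α → β) (s : Finset α) :
    ∑ e ∈ s.image g, f e ≤ ∑ i ∈ s, f (g i) := by
  induction s using Finset.induction_on with
  | empty => simp
  | insert _ _ ha ih =>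
    rw [Finset.image_insert, Finset.sum_insert ha]
    exact le_trans (sum_insert_le' f hf _ _) (by linarith)

lemma sum_union8' {α : Type*} [DecidableEq α] (f : α → ℝ) (hf : ∀ e, 0 ≤ f e)
    (A B C D E F G H : Finset α) :
    ∑ e ∈ (A ∪ B ∪ C ∪ D ∪ E ∪ F ∪ G ∪ H), f e ≤
      ∑ e ∈ A, f e + ∑ e ∈ B, f e + ∑ e ∈ C, f e + ∑ e ∈ D, f e + ∑ e ∈ E, f e +
      ∑ e ∈ F, f e + ∑ e ∈ G, f e + ∑ e ∈ H, f e := by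
  have h1 := sum_union_le' f hf (A ∪ B ∪ C ∪ D ∪ E ∪ F ∪ G) H
  have h2 := sum_union_le' f hf (A ∪ B ∪ C ∪ D ∪ E ∪ F) G
  have h3 := sum_union_le' f hf (A ∪ B ∪ C ∪ D ∪ E) F
  have h4 := sum_union_le' f hf (A ∪ B ∪ C ∪ D) E
  have h5 := sum_union_le' f hf (A ∪ B ∪ C) D
  have h6 := sum_union_le' f hf (A ∪ B) C
  have h7 := sum_union_le' f hf A B
  linarith

lemma sum_five' {α : Type*} [DecidableEq α] (f : α → ℝ) (hf : ∀ e, 0 ≤ f e)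
    (a b c d e : α) :
    ∑ x ∈ ({a, b, c, d, e} : Finset α), f x ≤ f a + f b + f c + f d + f e := by
  refine le_trans (sum_insert_le' f hf _ _) ?_
  have h2 := sum_insert_le' f hf b ({c, d, e} : Finset α)
  have h3 := sum_insert_le' f hf c ({d, e} : Finset α)
  have h4 := sum_insert_le' f hf d ({e} : Finset α)
  rw [Finset.sum_singleton] at h4
  linarith

lemma e2_le' (x : ℕ → ℝ) (hx : ∀ i, 0 ≤ x i) (u : Finset ℕ) :
    2 * ∑ p ∈ u.powersetCard 2, ∏ i ∈ p, x i ≤ (∑ i ∈ u, x i)^2 := by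
  induction u using Finset.induction_on with
  | empty =>
    rw [show (∅ : Finset ℕ).powersetCard 2 = ∅ by simp]
    simp
  | @insert a s ha ih =>
    have key : (insert a s).powersetCard 2 =
        s.powersetCard 2 ∪ (s.powersetCard 1).image (insert a) :=
      Finset.powersetCard_succ_insert ha 1
    rw [key, Finset.sum_insert ha]
    have h1 := sum_union_le' (fun p => ∏ i ∈ p, x i)
      (fun e => Finset.prod_nonneg fun i _ => hx i) (s.powersetCard 2)
      ((s.powersetCard 1).image (insert a))
    have h2 := sum_image_le' (fun p => ∏ i ∈ p, x i)
      (fun e => Finset.prod_nonneg fun i _ => hx i) (insert a) (s.powersetCard 1)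
    have h3 : ∑ p ∈ s.powersetCard 1, ∏ i ∈ insert a p, x i = x a * ∑ i ∈ s, x i := by
      rw [Finset.powersetCard_one, Finset.sum_map, Finset.mul_sum]
      refine Finset.sum_congr rfl fun i hi => ?_
      simp only [Function.Embedding.coeFn_mk]
      rw [Finset.prod_insert (by simp; rintro rfl; exact ha hi), Finset.prod_singleton]
    have h4 : 0 ≤ x a := hx a
    have h5 : 0 ≤ ∑ i ∈ s, x i := Finset.sum_nonneg fun i _ => hx i
    simp only [h3] at h2
    nlinarith [sq_nonneg (x a)]

lemma pairs_le' (x : ℕ → ℝ) (hx : ∀ i, 0 ≤ x i) (n : ℕ) :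
    ∑ e ∈ pairsWith 1 2 (Icc 3 n), ∏ i ∈ e, x i ≤
      x 1 * x 2 * ((∑ i ∈ Icc 3 n, x i)^2 / 2) := by
  unfold pairsWith
  have h1 := sum_image_le' (fun e => ∏ i ∈ e, x i)
    (fun e => Finset.prod_nonneg fun i _ => hx i)
    (fun p => insert 1 (insert 2 p)) ((Icc 3 n).powersetCard 2)
  refine le_trans h1 ?_
  have h2 : ∀ p ∈ (Icc 3 n).powersetCard 2,
      ∏ i ∈ insert 1 (insert 2 p), x i = x 1 * x 2 * ∏ i ∈ p, x i := by
    intro p hp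
    have hps : p ⊆ Icc 3 n := (Finset.mem_powersetCard.1 hp).1
    have h2p : (2 : ℕ) ∉ p := fun h => by simpa using (Finset.mem_Icc.1 (hps h)).1
    have h1p : (1 : ℕ) ∉ insert 2 p := by
      simp only [Finset.mem_insert]
      push_neg
      exact ⟨by norm_num, fun h => by simpa using (Finset.mem_Icc.1 (hps h)).1⟩
    rw [Finset.prod_insert h1p, Finset.prod_insert h2p, mul_assoc]
  rw [Finset.sum_congr rfl h2]
  have h3 := e2_le' x hx (Icc 3 n)
  have h4 : 0 ≤ x 1 * x 2 := mul_nonneg (hx 1) (hx 2)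
  rw [← Finset.mul_sum]
  nlinarith

lemma singles_le' (x : ℕ → ℝ) (hx : ∀ i, 0 ≤ x i) (a b c m n : ℕ)
    (hab : a < b) (hbc : b < c) (hcm : c < m) :
    ∑ e ∈ singlesWith a b c (Icc m n), ∏ i ∈ e, x i ≤
      x a * x b * x c * ∑ k ∈ Icc m n, x k := by
  unfold singlesWith
  have h1 := sum_image_le' (fun e => ∏ i ∈ e, x i)
    (fun e => Finset.prod_nonneg fun i _ => hx i)
    (fun k => ({a, b, c, k} : Finset ℕ)) (Icc m n)
  refine le_trans h1 (le_of_eq ?_)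
  rw [Finset.mul_sum]
  refine Finset.sum_congr rfl fun k hk => ?_
  have hmk : m ≤ k := (Finset.mem_Icc.1 hk).1
  have hA : a ∉ ({b, c, k} : Finset ℕ) := by
    simp only [Finset.mem_insert, Finset.mem_singleton]; push_neg
    exact ⟨by omega, by omega, by omega⟩
  have hB : b ∉ ({c, k} : Finset ℕ) := by
    simp only [Finset.mem_insert, Finset.mem_singleton]; push_neg
    exact ⟨by omega, by omega⟩
  have hC : c ∉ ({k} : Finset ℕ) := by
    simp only [Finset.mem_singleton]; omega
  show ∏ i ∈ insert a (insert b (insert c {k})), x i = _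
  rw [Finset.prod_insert hA, Finset.prod_insert hB, Finset.prod_insert hC,
    Finset.prod_singleton]
  ring

lemma key3' (c d e f t : ℝ) (hc : 0 ≤ c) (hd : 0 ≤ d) (he : 0 ≤ e) (hf : 0 ≤ f)
    (ht : 0 ≤ t) :
    c*d*e+c*d*f+c*d*t+c*e*f+c*e*t+c*f*t+d*e*f+d*e*t+d*f*t+e*f*t ≤
      (2/25)*(c+d+e+f+t)^3 := by
  nlinarith [sq_nonneg (c-d), sq_nonneg (c-e), sq_nonneg (c-f), sq_nonneg (c-t),
    sq_nonneg (d-e), sq_nonneg (d-f), sq_nonneg (d-t), sq_nonneg (e-f),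
    sq_nonneg (e-t), sq_nonneg (f-t), mul_nonneg hc hd, mul_nonneg he hf,
    mul_nonneg (mul_nonneg hc hd) he]

lemma key1' (p s : ℝ) (hp : 0 ≤ p) (hs : 0 ≤ s) (h : p + s = 1) :
    p^2*s^2/8 + (2/25)*p*s^3 ≤ 2/135 := by
  have h1 : s = 1 - p := by linarith
  subst h1
  nlinarith [mul_nonneg hp hs, sq_nonneg (p - 37/100), sq_nonneg (p*(1-p) - 6/25),
    mul_nonneg (mul_nonneg hp hp) hs, mul_nonneg hp (mul_nonneg hs hs)]

lemma key2' (a b s : ℝ) (ha : 0 ≤ a) (hb : 0 ≤ b) (hs : 0 ≤ s) (h : a + b + s = 1) :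
    a*b*s^2/2 + (2/25)*(a+b)*s^3 ≤ 2/135 := by
  have := key1' (a+b) s (by linarith) hs (by linarith)
  nlinarith [sq_nonneg (a-b), sq_nonneg s, mul_nonneg (mul_nonneg hs hs) (sq_nonneg (a-b))]

set_option maxHeartbeats 1000000 in
lemma combine' (a b c d e f g t : ℝ) (ha : 0 ≤ a) (hb : 0 ≤ b) (hc : 0 ≤ c)
    (hd : 0 ≤ d) (he : 0 ≤ e) (hf : 0 ≤ f) (hg : 0 ≤ g) (ht : 0 ≤ t) (hgt : g ≤ t)
    (hsum : a + b + (c + d + e + f + t) = 1) :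
    a*b*((c+d+e+f+t)^2/2) + a*c*d*(e+(f+t)) + a*c*e*(f+t) + a*c*f*t +
      a*d*e*(f+t) + a*d*f*t + a*e*f*t +
      (b*(c*(d*e)) + b*(c*(d*f)) + b*(c*(d*g)) + b*(c*(e*f)) + b*(d*(e*f))) ≤ 2/135 := by
  have h1 := key3' c d e f t hc hd he hf ht
  have hA := mul_le_mul_of_nonneg_left h1 ha
  have hB := mul_le_mul_of_nonneg_left h1 hb
  have hg' : b*(c*(d*g)) ≤ b*(c*(d*t)) := by
    have : c*(d*g) ≤ c*(d*t) :=
      mul_le_mul_of_nonneg_left (mul_le_mul_of_nonneg_left hgt hd) hc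
    exact mul_le_mul_of_nonneg_left this hb
  have n1 : 0 ≤ b*(c*(e*t)) := by positivity
  have n2 : 0 ≤ b*(c*(f*t)) := by positivity
  have n3 : 0 ≤ b*(d*(e*t)) := by positivity
  have n4 : 0 ≤ b*(d*(f*t)) := by positivity
  have n5 : 0 ≤ b*(e*(f*t)) := by positivity
  have hK := key2' a b (c+d+e+f+t) ha hb (by positivity) hsum
  linarith [hA, hB, hg', hK, n1, n2, n3, n4, n5]

/-- For `n ≥ 8`, `λ(F₁₀) ≤ 2/135 < 0.0169`. -/
theorem lagrangian_F10 (n : ℕ) (hn : 8 ≤ n) :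
    lagN n (F10 n) ≤ 2 / 135 ∧ (2 / 135 : ℝ) < 0.0169 := by
  refine ⟨?_, by norm_num⟩
  refine Real.sSup_le ?_ (by norm_num)
  rintro v ⟨x, hx, hsum, rfl⟩
  have hnn : ∀ e : Finset ℕ, 0 ≤ ∏ i ∈ e, x i :=
    fun e => Finset.prod_nonneg fun i _ => hx i
  have split : ∀ a : ℕ, a ≤ n →
      ∑ i ∈ Icc a n, x i = x a + ∑ i ∈ Icc (a+1) n, x i := by
    intro a hA
    have hins : Icc a n = insert a (Icc (a+1) n) := by
      ext i; simp only [Finset.mem_Icc, Finset.mem_insert]; omega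
    rw [hins, Finset.sum_insert (by simp only [Finset.mem_Icc]; omega)]
  have s1 := split 1 (by omega)
  have s2 := split 2 (by omega)
  have s3 := split 3 (by omega)
  have s4 := split 4 (by omega)
  have s5 := split 5 (by omega)
  have s6 := split 6 (by omega)
  have hS7 : 0 ≤ ∑ i ∈ Icc 7 n, x i := Finset.sum_nonneg fun i _ => hx i
  have hx7 : x 7 ≤ ∑ i ∈ Icc 7 n, x i :=
    Finset.single_le_sum (fun i _ => hx i) (by simp only [Finset.mem_Icc]; omega)
  -- bounds on the pieces
  have hP := pairs_le' x hx n
  have h34 := singles_le' x hx 1 3 4 5 n (by omega) (by omega) (by omega)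
  have h35 := singles_le' x hx 1 3 5 6 n (by omega) (by omega) (by omega)
  have h36 := singles_le' x hx 1 3 6 7 n (by omega) (by omega) (by omega)
  have h45 := singles_le' x hx 1 4 5 6 n (by omega) (by omega) (by omega)
  have h46 := singles_le' x hx 1 4 6 7 n (by omega) (by omega) (by omega)
  have h56 := singles_le' x hx 1 5 6 7 n (by omega) (by omega) (by omega)
  have hE := sum_five' (fun e => ∏ i ∈ e, x i) hnn
    ({2,3,4,5} : Finset ℕ) ({2,3,4,6} : Finset ℕ) ({2,3,4,7} : Finset ℕ)
    ({2,3,5,6} : Finset ℕ) ({2,4,5,6} : Finset ℕ)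
  have p1 : ∏ i ∈ ({2,3,4,5} : Finset ℕ), x i = x 2 * (x 3 * (x 4 * x 5)) := by
    rw [Finset.prod_insert (by decide), Finset.prod_insert (by decide),
      Finset.prod_insert (by decide), Finset.prod_singleton]
  have p2 : ∏ i ∈ ({2,3,4,6} : Finset ℕ), x i = x 2 * (x 3 * (x 4 * x 6)) := by
    rw [Finset.prod_insert (by decide), Finset.prod_insert (by decide),
      Finset.prod_insert (by decide), Finset.prod_singleton]
  have p3 : ∏ i ∈ ({2,3,4,7} : Finset ℕ), x i = x 2 * (x 3 * (x 4 * x 7)) := by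
    rw [Finset.prod_insert (by decide), Finset.prod_insert (by decide),
      Finset.prod_insert (by decide), Finset.prod_singleton]
  have p4 : ∏ i ∈ ({2,3,5,6} : Finset ℕ), x i = x 2 * (x 3 * (x 5 * x 6)) := by
    rw [Finset.prod_insert (by decide), Finset.prod_insert (by decide),
      Finset.prod_insert (by decide), Finset.prod_singleton]
  have p5 : ∏ i ∈ ({2,4,5,6} : Finset ℕ), x i = x 2 * (x 4 * (x 5 * x 6)) := by
    rw [Finset.prod_insert (by decide), Finset.prod_insert (by decide),
      Finset.prod_insert (by decide), Finset.prod_singleton]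
  rw [p1, p2, p3, p4, p5] at hE
  -- split the union
  simp only [F10]
  refine le_trans (sum_union8' (fun e => ∏ i ∈ e, x i) hnn _ _ _ _ _ _ _ _) ?_
  -- rewrite tail sums
  rw [s3, s4, s5, s6] at hP
  rw [s5, s6] at h34
  rw [s6] at h35
  rw [s6] at h45
  rw [s1, s2, s3, s4, s5, s6] at hsum
  norm_num at hP h34 h35 h45 hsum
  have hC := combine' (x 1) (x 2) (x 3) (x 4) (x 5) (x 6) (x 7) (∑ i ∈ Icc 7 n, x i)
    (hx 1) (hx 2) (hx 3) (hx 4) (hx 5) (hx 6) (hx 7) hS7 hx7 (by linarith)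
  linarith [hP, h34, h35, h36, h45, h46, h56, hE, hC]
end
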